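/- arXiv:1712.03492 — 6 statements merged into one kernel-verified Lean document; each statement's English description precedes it below -/
import Mathlib

section
/- Let P be an additive category, let α : A → B and γ : C → B be morphisms of P, and let (W, p : W → A, q : W → C) be a weak pullback of the cospan (α, γ). Then the morphism of the Freyd category A(P) from the object (A ← W) with structure morphism p to the object (B ← C) with structure morphism γ, represented by α (with witness q), is a monomorphism in A(P). -/
open CategoryTheory Limits Opposite

set_option linter.unusedSectionVars false

universe v u

/-- An object of the Freyd category of `P`: a morphism `ρ : R ⟶ A` of `P`,
thought of as "the object `A` with relations `R`". -/
structure FreydObj (P : Type u) [CategoryTheory.Category.{v} P] : Type max u v where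
  R : P
  A : P
  ρ : R ⟶ A

namespace FreydObj

variable {P : Type u} [Category.{v} P] [Preadditive P]

/-- The "pre-Freyd" category: morphisms are morphism data admitting a witness;
the Freyd category is its quotient by the relation of having a homotopy `λ`. -/
instance : Category.{v} (FreydObj P) where
  Hom X Y := {α : X.A ⟶ Y.A // ∃ w : X.R ⟶ Y.R, X.ρ ≫ α = w ≫ Y.ρ}
  id X := ⟨𝟙 X.A, ⟨𝟙 X.R, by simp⟩⟩
  comp {X Y Z} f g := ⟨f.1 ≫ g.1, by
    obtain ⟨w, hw⟩ := f.2
    obtain ⟨v, hv⟩ := g.2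
    refine ⟨w ≫ v, ?_⟩
    rw [← Category.assoc, hw, Category.assoc, hv, Category.assoc]⟩
  id_comp f := Subtype.ext (Category.id_comp _)
  comp_id f := Subtype.ext (Category.comp_id _)
  assoc f g h := Subtype.ext (Category.assoc _ _ _)

@[simp] lemma comp_val {X Y Z : FreydObj P} (f : X ⟶ Y) (g : Y ⟶ Z) :
    (f ≫ g).1 = f.1 ≫ g.1 := rfl

@[simp] lemma id_val (X : FreydObj P) : (𝟙 X : X ⟶ X).1 = 𝟙 X.A := rfl

instance homAdd (X Y : FreydObj P) : Add (X ⟶ Y) :=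
  ⟨fun f g => ⟨f.1 + g.1, by
    obtain ⟨w, hw⟩ := f.2
    obtain ⟨v, hv⟩ := g.2
    exact ⟨w + v, by rw [Preadditive.comp_add, Preadditive.add_comp, hw, hv]⟩⟩⟩

instance homZero (X Y : FreydObj P) : Zero (X ⟶ Y) := ⟨⟨0, ⟨0, by simp⟩⟩⟩

instance homNeg (X Y : FreydObj P) : Neg (X ⟶ Y) :=
  ⟨fun f => ⟨-f.1, by
    obtain ⟨w, hw⟩ := f.2
    exact ⟨-w, by rw [Preadditive.comp_neg, Preadditive.neg_comp, hw]⟩⟩⟩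

@[simp] lemma add_val {X Y : FreydObj P} (f g : X ⟶ Y) : (f + g).1 = f.1 + g.1 := rfl
@[simp] lemma zero_val (X Y : FreydObj P) : (0 : X ⟶ Y).1 = 0 := rfl
@[simp] lemma neg_val {X Y : FreydObj P} (f : X ⟶ Y) : (-f).1 = -f.1 := rfl

instance homAddCommGroup (X Y : FreydObj P) : AddCommGroup (X ⟶ Y) where
  add_assoc f g h := Subtype.ext (add_assoc f.1 g.1 h.1)
  zero_add f := Subtype.ext (zero_add f.1)
  add_zero f := Subtype.ext (add_zero f.1)
  add_comm f g := Subtype.ext (add_comm f.1 g.1)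
  neg_add_cancel f := Subtype.ext (neg_add_cancel f.1)
  nsmul := nsmulRec
  zsmul := zsmulRec

instance : Preadditive (FreydObj P) where
  add_comp _ _ _ f f' g := Subtype.ext (by simp [Preadditive.add_comp])
  comp_add _ _ _ f g g' := Subtype.ext (by simp [Preadditive.comp_add])

end FreydObj

/-- Two morphism data are identified in the Freyd category iff their difference
factors through the relations of the target. -/
def freydRel (P : Type u) [Category.{v} P] [Preadditive P] : HomRel (FreydObj P) :=
  fun {X Y} f g => ∃ l : X.A ⟶ Y.R, l ≫ Y.ρ = f.1 - g.1

instance freydRel_congruence (P : Type u) [Category.{v} P] [Preadditive P] :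
    Congruence (freydRel P) where
  equivalence :=
    { refl := fun f => ⟨0, by simp⟩
      symm := fun {f g} h => by
        obtain ⟨l, hl⟩ := h
        exact ⟨-l, by rw [Preadditive.neg_comp, hl]; abel⟩
      trans := fun {f g h} h₁ h₂ => by
        obtain ⟨l₁, hl₁⟩ := h₁
        obtain ⟨l₂, hl₂⟩ := h₂
        exact ⟨l₁ + l₂, by rw [Preadditive.add_comp, hl₁, hl₂]; abel⟩ }
  comp_left f g g' h := by
    obtain ⟨l, hl⟩ := h
    exact ⟨f.1 ≫ l, by rw [Category.assoc, hl, Preadditive.comp_sub]; rfl⟩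
  comp_right g h := by
    obtain ⟨l, hl⟩ := h
    obtain ⟨w, hw⟩ := g.2
    exact ⟨l ≫ w, by
      rw [Category.assoc, ← hw, ← Category.assoc, hl, Preadditive.sub_comp]; rfl⟩

/-- The Freyd category of an additive category `P`. -/
abbrev Freyd (P : Type u) [Category.{v} P] [Preadditive P] :=
  CategoryTheory.Quotient (freydRel P)

noncomputable instance (P : Type u) [Category.{v} P] [Preadditive P] :
    Preadditive (Freyd P) :=
  CategoryTheory.Quotient.preadditive (freydRel P) (by
    rintro X Y f₁ f₂ g₁ g₂ ⟨l₁, hl₁⟩ ⟨l₂, hl₂⟩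
    exact ⟨l₁ + l₂, by
      rw [Preadditive.add_comp, hl₁, hl₂]
      show _ = (f₁ + g₁).1 - (f₂ + g₂).1
      simp only [FreydObj.add_val]
      abel⟩)

/-- The projection functor from the pre-Freyd category to the Freyd category. -/
abbrev Freyd.Q (P : Type u) [Category.{v} P] [Preadditive P] :
    FreydObj P ⥤ Freyd P :=
  CategoryTheory.Quotient.functor (freydRel P)

/-- `P` has weak kernels. -/
def HasWeakKernels (P : Type u) [Category.{v} P] [Preadditive P] : Prop :=
  ∀ ⦃A B : P⦄ (f : A ⟶ B), ∃ (K : P) (κ : K ⟶ A), κ ≫ f = 0 ∧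
    ∀ ⦃T : P⦄ (τ : T ⟶ A), τ ≫ f = 0 → ∃ u : T ⟶ K, u ≫ κ = τ


namespace Freyd

variable {P : Type u} [Category.{v} P] [Preadditive P]

lemma Q_map_eq_zero_iff {X Y : FreydObj P} (f : X ⟶ Y) :
    (Freyd.Q P).map f = 0 ↔ ∃ l : X.A ⟶ Y.R, l ≫ Y.ρ = f.1 := by
  rw [show (0 : (Freyd.Q P).obj X ⟶ (Freyd.Q P).obj Y) = (Freyd.Q P).map 0 from rfl,
    Quotient.functor_map_eq_iff]
  simp only [freydRel, FreydObj.zero_val, sub_zero]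

lemma mono_Q_map_of_factor {X Y : FreydObj P} (f : X ⟶ Y)
    (h : ∀ ⦃T : P⦄ (g : T ⟶ X.A) (l : T ⟶ Y.R), l ≫ Y.ρ = g ≫ f.1 →
      ∃ m : T ⟶ X.R, m ≫ X.ρ = g) :
    Mono ((Freyd.Q P).map f) := by
  refine Preadditive.mono_of_cancel_zero _ fun {Z} g hg => ?_
  obtain ⟨Z⟩ := Z
  obtain ⟨g, rfl⟩ := (Freyd.Q P).map_surjective g
  rw [← Functor.map_comp, Q_map_eq_zero_iff] at hg
  obtain ⟨l, hl⟩ := hg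
  exact (Q_map_eq_zero_iff g).2 (h g.1 l hl)

end Freyd

/-- given a cospan `α : A ⟶ B`, `γ : C ⟶ B` in an additive category `P` and a
weak pullback `(W, p, q)` of it, the morphism of the Freyd category from `(A ← W)` (with
structure morphism `p`) to `(B ← C)` (with structure morphism `γ`), represented by `α`
(with witness `q`), is a monomorphism. -/
theorem freyd_mono (P : Type u) [Category.{v} P] [Preadditive P]
    {A B C W : P} (α : A ⟶ B) (γ : C ⟶ B) (p : W ⟶ A) (q : W ⟶ C)
    (comm : p ≫ α = q ≫ γ)
    (wpb : ∀ ⦃T : P⦄ (p' : T ⟶ A) (q' : T ⟶ C), p' ≫ α = q' ≫ γ →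
      ∃ u : T ⟶ W, u ≫ p = p' ∧ u ≫ q = q') :
    Mono ((Freyd.Q P).map (X := ⟨W, A, p⟩) (Y := ⟨C, B, γ⟩) ⟨α, ⟨q, comm⟩⟩) := by
  refine Freyd.mono_Q_map_of_factor _ fun T g l hl => ?_
  obtain ⟨u, hu, -⟩ := wpb g l hl.symm
  exact ⟨u, hu⟩
end

section
/- Let P be an additive category, A an abelian category, and F : P → A a fully faithful additive functor such that F(X) is a projective object of A for every object X of P. Then the induced functor U : A(P) → A, sending an object (A ← R_A) with structure morphism ρ_A to the cokernel of F(ρ_A) and a morphism [α] to the morphism induced between cokernels, is fully faithful, and its essential image is the full subcategory of A consisting of those objects M for which there exist objects P_M, Q_M of P and an exact sequence F(Q_M) → F(P_M) → M → 0 in A. In particular, U is an equivalence of A(P) with this full subcategory. -/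
/-!
Since `F` lands in projectives, a morphism `coker (F ρ_X) ⟶ coker (F ρ_Y)` lifts along the
cokernel projections to a morphism of presentations `F X.A ⟶ F Y.A`, `F X.R ⟶ F Y.R`, and two
lifts of the same morphism differ by a map `F X.A ⟶ F Y.R` followed by `F ρ_Y`. As `F` is fully
faithful these lifts come from `P`, which gives fullness and faithfulness of `U`. The essential
image is read off from the fact that `F Q ⟶ F P ⟶ M ⟶ 0` is exact iff `M` is the cokernel.
-/

open CategoryTheory Limits Opposite

set_option linter.unusedSectionVars false

universe v u

universe v₂ u₂

section Induced

variable {P : Type u} [Category.{v} P] [Preadditive P]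
variable {A : Type u₂} [Category.{v₂} A] [Abelian A] (F : P ⥤ A)

/-- The functor `FreydObj P ⥤ A` sending `(A ← R_A)` to `coker (F ρ_A)`. -/
noncomputable def preInducedFunctor : FreydObj P ⥤ A where
  obj X := cokernel (F.map X.ρ)
  map {X Y} f :=
    cokernel.map (F.map X.ρ) (F.map Y.ρ) (F.map f.2.choose) (F.map f.1)
      (by rw [← F.map_comp, ← F.map_comp]; exact congrArg F.map f.2.choose_spec)
  map_id X := by
    apply coequalizer.hom_ext
    simp
  map_comp {X Y Z} f g := by
    apply coequalizer.hom_ext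
    simp only [cokernel.π_desc, cokernel.π_desc_assoc, FreydObj.comp_val, F.map_comp,
      Category.assoc]

/-- The induced functor `A(P) ⥤ A`. -/
noncomputable def inducedFunctor [F.Additive] : Freyd P ⥤ A :=
  CategoryTheory.Quotient.lift (freydRel P) (preInducedFunctor F) (by
    rintro X Y f g ⟨l, hl⟩
    apply coequalizer.hom_ext
    have hf : f.1 = g.1 + l ≫ Y.ρ := by rw [hl]; abel
    simp [preInducedFunctor, hf, Preadditive.add_comp])

end Induced

namespace CategoryTheory.Quotient

variable {C : Type*} [Category C] {D : Type*} [Category D] {r : HomRel C}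

lemma full_lift (L : C ⥤ D) [L.Full]
    (H : ∀ (x y : C) (f₁ f₂ : x ⟶ y), r f₁ f₂ → L.map f₁ = L.map f₂) :
    (lift r L H).Full where
  map_surjective := by
    rintro ⟨X⟩ ⟨Y⟩ (φ : L.obj X ⟶ L.obj Y)
    obtain ⟨f, rfl⟩ := L.map_surjective φ
    exact ⟨(functor r).map f, rfl⟩

lemma faithful_lift (L : C ⥤ D)
    (H : ∀ (x y : C) (f₁ f₂ : x ⟶ y), r f₁ f₂ → L.map f₁ = L.map f₂)
    (hL : ∀ {X Y : C} (f g : X ⟶ Y), L.map f = L.map g → r f g) :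
    (lift r L H).Faithful where
  map_injective := by
    rintro ⟨_⟩ ⟨_⟩ ⟨f⟩ ⟨g⟩ h
    exact Quotient.sound _ (hL f g h)

end CategoryTheory.Quotient

section Abelian

variable {C : Type*} [Category C] [Abelian C]

lemma exists_comp_eq_of_comp_cokernel_π_eq_zero {T R B : C} [Projective T] (f : R ⟶ B)
    (d : T ⟶ B) (h : d ≫ cokernel.π f = 0) : ∃ l : T ⟶ R, l ≫ f = d :=
  ⟨(ShortComplex.exact_cokernel f).liftFromProjective d h,
    (ShortComplex.exact_cokernel f).liftFromProjective_comp d h⟩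

lemma exists_lift_of_hom_cokernel {R₁ B₁ R₂ B₂ : C} [Projective R₁] [Projective B₁]
    (f₁ : R₁ ⟶ B₁) (f₂ : R₂ ⟶ B₂) (φ : cokernel f₁ ⟶ cokernel f₂) :
    ∃ (w : R₁ ⟶ R₂) (a : B₁ ⟶ B₂),
      f₁ ≫ a = w ≫ f₂ ∧ a ≫ cokernel.π f₂ = cokernel.π f₁ ≫ φ := by
  let a := Projective.factorThru (cokernel.π f₁ ≫ φ) (cokernel.π f₂)
  have ha : a ≫ cokernel.π f₂ = cokernel.π f₁ ≫ φ := Projective.factorThru_comp _ _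
  have hf₁a : (f₁ ≫ a) ≫ cokernel.π f₂ = 0 := by
    rw [Category.assoc, ha, cokernel.condition_assoc, zero_comp]
  obtain ⟨w, hw⟩ := exists_comp_eq_of_comp_cokernel_π_eq_zero f₂ _ hf₁a
  exact ⟨w, a, hw.symm, ha⟩

end Abelian

section Induced

variable {P : Type u} [Category.{v} P] [Preadditive P]
variable {A : Type u₂} [Category.{v₂} A] [Abelian A] (F : P ⥤ A)

@[simp]
lemma cokernel_π_comp_preInducedFunctor_map {X Y : FreydObj P} (f : X ⟶ Y) :
    cokernel.π (F.map X.ρ) ≫ (preInducedFunctor F).map f =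
      F.map f.1 ≫ cokernel.π (F.map Y.ρ) := by
  simp [preInducedFunctor]

lemma preInducedFunctor_full [F.Full] [F.Faithful] (hproj : ∀ X : P, Projective (F.obj X)) :
    (preInducedFunctor F).Full where
  map_surjective {X Y} φ := by
    have := hproj X.A
    have := hproj X.R
    obtain ⟨w', a, hw', ha⟩ := exists_lift_of_hom_cokernel _ _ φ
    obtain ⟨α, rfl⟩ := F.map_surjective a
    obtain ⟨w, rfl⟩ := F.map_surjective w'
    have hwit : X.ρ ≫ α = w ≫ Y.ρ := F.map_injective (by simpa only [F.map_comp] using hw')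
    refine ⟨⟨α, w, hwit⟩, coequalizer.hom_ext ?_⟩
    rw [cokernel_π_comp_preInducedFunctor_map]
    exact ha

lemma freydRel_of_preInducedFunctor_map_eq [F.Full] [F.Faithful] [F.Additive]
    (hproj : ∀ X : P, Projective (F.obj X)) {X Y : FreydObj P} (f g : X ⟶ Y)
    (h : (preInducedFunctor F).map f = (preInducedFunctor F).map g) : freydRel P f g := by
  have := hproj X.A
  have hfg : F.map (f.1 - g.1) ≫ cokernel.π (F.map Y.ρ) = 0 := by
    rw [F.map_sub, Preadditive.sub_comp, sub_eq_zero, ← cokernel_π_comp_preInducedFunctor_map,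
      ← cokernel_π_comp_preInducedFunctor_map, h]
  obtain ⟨l', hl'⟩ := exists_comp_eq_of_comp_cokernel_π_eq_zero (F.map Y.ρ) _ hfg
  obtain ⟨l, rfl⟩ := F.map_surjective l'
  exact ⟨l, F.map_injective (by rwa [F.map_comp])⟩

lemma exists_inducedFunctor_obj_iso_iff [F.Additive] (M : A) :
    (∃ X : Freyd P, Nonempty ((inducedFunctor F).obj X ≅ M)) ↔
      ∃ (P₀ Q₀ : P) (g : Q₀ ⟶ P₀) (c : F.obj P₀ ⟶ M) (hz : F.map g ≫ c = 0),
        Epi c ∧ (ShortComplex.mk (F.map g) c hz).Exact := by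
  constructor
  · rintro ⟨⟨X⟩, ⟨i⟩⟩
    change cokernel (F.map X.ρ) ≅ M at i
    refine ⟨X.A, X.R, X.ρ, cokernel.π _ ≫ i.hom, by simp, epi_comp _ _, ?_⟩
    refine ShortComplex.exact_of_iso ?_ (ShortComplex.exact_cokernel (F.map X.ρ))
    exact ShortComplex.isoMk (Iso.refl _) (Iso.refl _) i (by simp) (by simp)
  · rintro ⟨P₀, Q₀, g, c, hz, hc, hexact⟩
    exact ⟨(Freyd.Q P).obj ⟨Q₀, P₀, g⟩,
      ⟨IsColimit.coconePointUniqueUpToIso (cokernelIsCokernel (F.map g)) hexact.gIsCokernel⟩⟩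

end Induced

/-- if `F : P ⥤ A` is a fully faithful additive functor from an additive
category to an abelian category whose values are projective, then the induced functor
`U : A(P) ⥤ A` is fully faithful, and its essential image consists exactly of those
objects `M` admitting an exact sequence `F Q₀ ⟶ F P₀ ⟶ M ⟶ 0`. -/
theorem induced_functor_equivalence (P : Type u) [Category.{v} P] [Preadditive P]
    (A : Type u₂) [Category.{v₂} A] [Abelian A]
    (F : P ⥤ A) [F.Full] [F.Faithful] [F.Additive]
    (hproj : ∀ X : P, Projective (F.obj X)) :
    (inducedFunctor F).Full ∧ (inducedFunctor F).Faithful ∧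
      ∀ M : A, (∃ X : Freyd P, Nonempty ((inducedFunctor F).obj X ≅ M)) ↔
        ∃ (P₀ Q₀ : P) (g : Q₀ ⟶ P₀) (c : F.obj P₀ ⟶ M) (hz : F.map g ≫ c = 0),
          Epi c ∧ (ShortComplex.mk (F.map g) c hz).Exact := by
  have := preInducedFunctor_full F hproj
  exact ⟨Quotient.full_lift _ _, Quotient.faithful_lift _ _
    (freydRel_of_preInducedFunctor_map_eq F hproj), exists_inducedFunctor_obj_iso_iff F⟩
end

section
/- Let P be an additive category. The Freyd category A(P) is equivalent to the category fp(P^op, Ab) of finitely presented contravariant functors: the full subcategory of the category of additive functors P^op → Ab consisting of those functors F for which there exist objects A, B of P and an exact sequence of functors Hom_P(−, B) → Hom_P(−, A) → F → 0. -/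
open CategoryTheory Limits Opposite

set_option linter.unusedSectionVars false

universe v u

/-- A contravariant additive functor `F : Pᵒᵖ ⥤ Ab` is finitely presented if it admits an
exact sequence `Hom(−, B) ⟶ Hom(−, A) ⟶ F ⟶ 0`, where by Yoneda the first map is induced
by a morphism `g : B ⟶ A`. -/
def IsFinitelyPresentedFunctor {P : Type u} [Category.{v} P] [Preadditive P]
    (F : Pᵒᵖ ⥤ AddCommGrpCat.{v}) : Prop :=
  ∃ (A B : P) (g : B ⟶ A) (π : preadditiveYoneda.obj A ⟶ F)
    (hz : preadditiveYoneda.map g ≫ π = 0),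
      Epi π ∧ (ShortComplex.mk (preadditiveYoneda.map g) π hz).Exact

/-! The object `ρ : R ⟶ A` goes to the cokernel `F_ρ` of `Hom(−, R) ⟶ Hom(−, A)`, computed
objectwise as `Hom(T, A) ⧸ ρ_* Hom(T, R)`. It is finitely presented by construction, and a
presentation `Hom(−, B) ⟶ Hom(−, A) ⟶ F ⟶ 0` exhibits `F` as the cokernel `F_g`, so every
finitely presented functor is reached. By Yoneda, maps `Hom(−, A) ⟶ F_σ` are elements of
`F_σ(A)`, i.e. morphisms `A ⟶ B` modulo those factoring through `σ`; as `Hom(−, A) ⟶ F_ρ` is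
epi, this identifies `Hom(F_ρ, F_σ)` with the morphisms `ρ ⟶ σ` of the Freyd category. -/

lemma CategoryTheory.ShortComplex.exact_iff_forall_exact_map_evaluation {J C : Type*}
    [Category J] [Category C] [Abelian C] (S : ShortComplex (J ⥤ C)) :
    S.Exact ↔ ∀ j : J, (S.map ((evaluation J C).obj j)).Exact := by
  rw [ShortComplex.exact_iff_isZero_homology, Functor.isZero_iff]
  refine forall_congr' fun j => ?_
  rw [ShortComplex.exact_iff_isZero_homology]
  exact (S.mapHomologyIso ((evaluation J C).obj j)).symm.isZero_iff

lemma CategoryTheory.preadditiveYoneda_obj_hom_ext {C : Type u} [Category.{v} C] [Preadditive C]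
    {A : C} {G : Cᵒᵖ ⥤ AddCommGrpCat.{v}} {ψ ψ' : preadditiveYoneda.obj A ⟶ G}
    (h : ψ.app (op A) (𝟙 A) = ψ'.app (op A) (𝟙 A)) : ψ = ψ' := by
  have eval_id (χ : preadditiveYoneda.obj A ⟶ G) (T : C) (m : T ⟶ A) :
      χ.app (op T) m = G.map m.op (χ.app (op A) (𝟙 A)) :=
    calc χ.app (op T) m = χ.app (op T) ((preadditiveYoneda.obj A).map m.op (𝟙 A)) :=
          congr_arg (χ.app (op T)) (Category.comp_id m).symm
      _ = G.map m.op (χ.app (op A) (𝟙 A)) := NatTrans.naturality_apply χ m.op (𝟙 A)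
  ext ⟨T⟩ m
  rw [eval_id ψ T m, h, eval_id ψ' T m]

namespace FreydObj

variable {P : Type u} [Category.{v} P] [Preadditive P]

open Preadditive

def relations (Z : FreydObj P) (T : P) : AddSubgroup (T ⟶ Z.A) :=
  (rightComp T Z.ρ).range

lemma mem_relations {Z : FreydObj P} {T : P} {f : T ⟶ Z.A} :
    f ∈ Z.relations T ↔ ∃ w : T ⟶ Z.R, w ≫ Z.ρ = f :=
  Iff.rfl

lemma comp_mem_relations (Z : FreydObj P) {T T' : P} (h : T' ⟶ T) {f : T ⟶ Z.A}
    (hf : f ∈ Z.relations T) : h ≫ f ∈ Z.relations T' := by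
  obtain ⟨w, rfl⟩ := hf
  exact ⟨h ≫ w, Category.assoc _ _ _⟩

lemma mem_relations_comp {X Y : FreydObj P} (α : X ⟶ Y) {T : P} {f : T ⟶ X.A}
    (hf : f ∈ X.relations T) : f ≫ α.1 ∈ Y.relations T := by
  obtain ⟨w, rfl⟩ := hf
  obtain ⟨v, hv⟩ := α.2
  exact ⟨w ≫ v, show (w ≫ v) ≫ Y.ρ = (w ≫ X.ρ) ≫ α.1 by simp only [Category.assoc, hv]⟩

def coker (Z : FreydObj P) : Pᵒᵖ ⥤ AddCommGrpCat.{v} where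
  obj T := AddCommGrpCat.of ((T.unop ⟶ Z.A) ⧸ Z.relations T.unop)
  map h := AddCommGrpCat.ofHom <| QuotientAddGroup.map _ _ (leftComp Z.A h.unop)
    fun _ => Z.comp_mem_relations h.unop
  map_id T := by
    ext x
    exact congr_arg _ (Category.id_comp _)
  map_comp h h' := by
    ext x
    exact congr_arg _ (Category.assoc _ _ _)

instance (Z : FreydObj P) : Z.coker.Additive where
  map_add {_ _ f g} := by
    ext x
    induction x using QuotientAddGroup.induction_on
    exact congr_arg _ (add_comp _ _ _ _ _ _)

def cokerπ (Z : FreydObj P) : preadditiveYoneda.obj Z.A ⟶ Z.coker where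
  app T := AddCommGrpCat.ofHom (QuotientAddGroup.mk' (Z.relations T.unop))

lemma preadditiveYoneda_map_ρ_comp_cokerπ (Z : FreydObj P) :
    preadditiveYoneda.map Z.ρ ≫ Z.cokerπ = 0 := by
  ext T (w : T.unop ⟶ Z.R)
  exact (QuotientAddGroup.eq_zero_iff _).2 ⟨w, rfl⟩

instance (Z : FreydObj P) : Epi Z.cokerπ := by
  have (T : Pᵒᵖ) : Epi (Z.cokerπ.app T) :=
    (AddCommGrpCat.epi_iff_surjective _).2 (QuotientAddGroup.mk'_surjective (Z.relations T.unop))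
  exact NatTrans.epi_of_epi_app _

lemma preadditiveYoneda_map_comp_cokerπ_eq_iff (Z : FreydObj P) {T : P} (a b : T ⟶ Z.A) :
    preadditiveYoneda.map a ≫ Z.cokerπ = preadditiveYoneda.map b ≫ Z.cokerπ ↔
      a - b ∈ Z.relations T := by
  rw [← QuotientAddGroup.eq_iff_sub_mem]
  constructor
  · intro h
    have h₁ : ((𝟙 T ≫ a : T ⟶ Z.A) : _ ⧸ Z.relations T) = ↑(𝟙 T ≫ b) :=
      congr_arg (fun χ => χ.app (op T) (𝟙 T)) h
    simpa using h₁
  · intro h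
    apply preadditiveYoneda_obj_hom_ext
    show ((𝟙 T ≫ a : T ⟶ Z.A) : _ ⧸ Z.relations T) = ↑(𝟙 T ≫ b)
    simpa using h

def cokerMap {X Y : FreydObj P} (α : X ⟶ Y) : X.coker ⟶ Y.coker where
  app T := AddCommGrpCat.ofHom <| QuotientAddGroup.map _ _ (rightComp T.unop α.1)
    fun _ => mem_relations_comp α
  naturality _ _ h := by
    ext x
    induction x using QuotientAddGroup.induction_on
    exact congr_arg _ (Category.assoc _ _ _)

lemma cokerπ_comp_cokerMap {X Y : FreydObj P} (α : X ⟶ Y) :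
    X.cokerπ ≫ cokerMap α = preadditiveYoneda.map α.1 ≫ Y.cokerπ :=
  rfl

def cokerFunctor : FreydObj P ⥤ Pᵒᵖ ⥤ AddCommGrpCat.{v} where
  obj := coker
  map := cokerMap
  map_id X := by
    rw [← cancel_epi X.cokerπ, cokerπ_comp_cokerMap, id_val, preadditiveYoneda.map_id,
      Category.id_comp, Category.comp_id]
  map_comp {X _ _} f g := by
    rw [← cancel_epi X.cokerπ, ← Category.assoc, cokerπ_comp_cokerMap, cokerπ_comp_cokerMap,
      Category.assoc, cokerπ_comp_cokerMap, comp_val, preadditiveYoneda.map_comp, Category.assoc]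

lemma cokerMap_eq_iff {X Y : FreydObj P} (f g : X ⟶ Y) :
    cokerMap f = cokerMap g ↔ freydRel P f g := by
  rw [← cancel_epi X.cokerπ, cokerπ_comp_cokerMap, cokerπ_comp_cokerMap,
    preadditiveYoneda_map_comp_cokerπ_eq_iff]
  exact mem_relations

lemma exists_cokerMap_eq {X Y : FreydObj P} (φ : X.coker ⟶ Y.coker) :
    ∃ α : X ⟶ Y, cokerMap α = φ := by
  obtain ⟨a, ha⟩ := QuotientAddGroup.mk_surjective ((X.cokerπ ≫ φ).app (op X.A) (𝟙 X.A))
  have hφ : X.cokerπ ≫ φ = preadditiveYoneda.map a ≫ Y.cokerπ := by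
    apply preadditiveYoneda_obj_hom_ext
    rw [← ha]
    exact congr_arg _ (Category.id_comp a).symm
  have hρa : preadditiveYoneda.map (X.ρ ≫ a) ≫ Y.cokerπ =
      preadditiveYoneda.map 0 ≫ Y.cokerπ := by
    rw [preadditiveYoneda.map_comp, Category.assoc, ← hφ, ← Category.assoc,
      preadditiveYoneda_map_ρ_comp_cokerπ, zero_comp, preadditiveYoneda.map_zero, zero_comp]
  obtain ⟨w, hw⟩ := mem_relations.1 ((Y.preadditiveYoneda_map_comp_cokerπ_eq_iff _ _).1 hρa)
  refine ⟨⟨a, w, by simpa using hw.symm⟩, ?_⟩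
  rw [← cancel_epi X.cokerπ, cokerπ_comp_cokerMap, hφ]

lemma exact_cokerπ (Z : FreydObj P) :
    (ShortComplex.mk _ _ Z.preadditiveYoneda_map_ρ_comp_cokerπ).Exact := by
  rw [ShortComplex.exact_iff_forall_exact_map_evaluation]
  intro T
  rw [ShortComplex.ab_exact_iff]
  intro (f : T.unop ⟶ Z.A) hf
  exact (QuotientAddGroup.eq_zero_iff f).1 hf

lemma isFinitelyPresentedFunctor_coker (Z : FreydObj P) :
    IsFinitelyPresentedFunctor Z.coker :=
  ⟨Z.A, Z.R, Z.ρ, Z.cokerπ, _, inferInstance, Z.exact_cokerπ⟩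

noncomputable def cokerIsoOfExact {A B : P} (g : B ⟶ A) {F : Pᵒᵖ ⥤ AddCommGrpCat.{v}}
    (π : preadditiveYoneda.obj A ⟶ F) (hz : preadditiveYoneda.map g ≫ π = 0) [Epi π]
    (hex : (ShortComplex.mk _ _ hz).Exact) : (FreydObj.mk B A g).coker ≅ F :=
  IsColimit.coconePointUniqueUpToIso (exact_cokerπ ⟨B, A, g⟩).gIsCokernel hex.gIsCokernel

end FreydObj

abbrev finitelyPresented (P : Type u) [Category.{v} P] [Preadditive P] :
    ObjectProperty (Pᵒᵖ ⥤ AddCommGrpCat.{v}) :=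
  fun F => F.Additive ∧ IsFinitelyPresentedFunctor F

namespace Freyd

variable (P : Type u) [Category.{v} P] [Preadditive P]

def toFinitelyPresented : Freyd P ⥤ (finitelyPresented P).FullSubcategory :=
  CategoryTheory.Quotient.lift _
    ((finitelyPresented P).lift FreydObj.cokerFunctor
      fun Z => ⟨inferInstanceAs Z.coker.Additive, Z.isFinitelyPresentedFunctor_coker⟩)
    fun _ _ f g h => InducedCategory.hom_ext ((FreydObj.cokerMap_eq_iff f g).2 h)

instance : (toFinitelyPresented P).Faithful where
  map_injective {X Y} f g h := by
    obtain ⟨f, rfl⟩ := (Freyd.Q P).map_surjective f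
    obtain ⟨g, rfl⟩ := (Freyd.Q P).map_surjective g
    have hfg : FreydObj.cokerMap f = FreydObj.cokerMap g := (finitelyPresented P).ι.congr_map h
    exact CategoryTheory.Quotient.sound _ ((FreydObj.cokerMap_eq_iff f g).1 hfg)

instance : (toFinitelyPresented P).Full where
  map_surjective {X Y} φ := by
    obtain ⟨α, hα⟩ := FreydObj.exists_cokerMap_eq (X := X.as) (Y := Y.as) φ.hom
    exact ⟨(Freyd.Q P).map α, InducedCategory.hom_ext hα⟩

instance : (toFinitelyPresented P).EssSurj where
  mem_essImage := by
    rintro ⟨F, -, A, B, g, π, hz, hπ, hex⟩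
    exact ⟨(Freyd.Q P).obj ⟨B, A, g⟩,
      ⟨ObjectProperty.isoMk _ (FreydObj.cokerIsoOfExact g π hz hex)⟩⟩

end Freyd

/-- the Freyd category `A(P)` is equivalent to the category of finitely
presented contravariant functors `Pᵒᵖ ⥤ Ab`, i.e. the full subcategory of additive
functors admitting a presentation `Hom(−, B) ⟶ Hom(−, A) ⟶ F ⟶ 0`. -/
theorem freyd_equiv_fp_functors (P : Type u) [Category.{v} P] [Preadditive P] :
    Nonempty (Freyd P ≌
      ObjectProperty.FullSubcategory (fun F : Pᵒᵖ ⥤ AddCommGrpCat.{v} =>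
        F.Additive ∧ IsFinitelyPresentedFunctor F)) := by
  have : (Freyd.toFinitelyPresented P).IsEquivalence := {}
  exact ⟨(Freyd.toFinitelyPresented P).asEquivalence⟩
end

section
/- Let P be an additive category equipped with a B-homomorphism structure (1, H, ν), where B is an additive category with finite biproducts, and consider a linear system in P given by objects A_i, D_i (1 ≤ i ≤ m), B_j, C_j (1 ≤ j ≤ n) and morphisms α_ij : A_i → B_j, β_ij : C_j → D_i, γ_i : A_i → D_i. Then a family (X_j : B_j → C_j)_{j=1,…,n} is a solution of the system, i.e. Σ_{j=1}^n β_ij ∘ X_j ∘ α_ij = γ_i for all i, if and only if the morphism (ν(X_j))_j : 1 → ⊕_{j=1}^n H(B_j, C_j), composed with the matrix morphism (H(α_ij, β_ij))_{ij} : ⊕_{j=1}^n H(B_j, C_j) → ⊕_{i=1}^m H(A_i, D_i), equals (ν(γ_i))_i : 1 → ⊕_{i=1}^m H(A_i, D_i). In particular, the system admits a solution if and only if (ν(γ_i))_i factors through (H(α_ij, β_ij))_{ij} in B. -/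
open CategoryTheory Limits Opposite

set_option linter.unusedSectionVars false

universe v u

universe v₂ u₂

/-- A `B`-homomorphism structure on an additive category `P`: a distinguished object
`one`, a bifunctor `H : Pᵒᵖ ⥤ P ⥤ B` additive in each variable, and natural isomorphisms
of abelian groups `ν : (X ⟶ Y) ≃+ (one ⟶ H X Y)`. -/
structure HomStructure (P : Type u) [Category.{v} P] [Preadditive P]
    (B : Type u₂) [Category.{v₂} B] [Preadditive B] where
  one : B
  H : Pᵒᵖ ⥤ P ⥤ B
  additive₁ : H.Additive
  additive₂ : ∀ X : Pᵒᵖ, (H.obj X).Additive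
  ν : ∀ X Y : P, (X ⟶ Y) ≃+ (one ⟶ (H.obj (Opposite.op X)).obj Y)
  naturality : ∀ {X' X Y Y' : P} (a : X' ⟶ X) (f : X ⟶ Y) (b : Y ⟶ Y'),
    ν X' Y' (a ≫ f ≫ b) =
      ν X Y f ≫ (H.map a.op).app Y ≫ (H.obj (Opposite.op X')).map b

/-- The action of the bifunctor of a homomorphism structure on a pair of morphisms
`a : X' ⟶ X` (contravariant slot) and `b : Y ⟶ Y'` (covariant slot). -/
def HomStructure.Hbi {P : Type u} [Category.{v} P] [Preadditive P]
    {B : Type u₂} [Category.{v₂} B] [Preadditive B] (S : HomStructure P B)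
    {X' X Y Y' : P} (a : X' ⟶ X) (b : Y ⟶ Y') :
    (S.H.obj (Opposite.op X)).obj Y ⟶ (S.H.obj (Opposite.op X')).obj Y' :=
  (S.H.map a.op).app Y ≫ (S.H.obj (Opposite.op X')).map b

namespace HomStructure

variable {P : Type u} [Category.{v} P] [Preadditive P]
  {B : Type u₂} [Category.{v₂} B] [Preadditive B] (S : HomStructure P B)

lemma ν_comp_comp {X' X Y Y' : P} (a : X' ⟶ X) (f : X ⟶ Y) (b : Y ⟶ Y') :
    S.ν X' Y' (a ≫ f ≫ b) = S.ν X Y f ≫ S.Hbi a b :=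
  S.naturality a f b

variable [HasFiniteBiproducts B] {I J : Type} [Fintype I] [Fintype J]
  {A D : I → P} {Bo C : J → P}

lemma lift_ν_comp_matrix_π (α : ∀ i j, A i ⟶ Bo j) (β : ∀ i j, C j ⟶ D i)
    (X : ∀ j, Bo j ⟶ C j) (i : I) :
    biproduct.lift (fun j => S.ν (Bo j) (C j) (X j)) ≫
        biproduct.matrix (fun j i => S.Hbi (α i j) (β i j)) ≫ biproduct.π _ i =
      S.ν (A i) (D i) (∑ j, α i j ≫ X j ≫ β i j) := by
  rw [biproduct.matrix_π, biproduct.lift_desc, map_sum]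
  exact Finset.sum_congr rfl fun j _ => (S.ν_comp_comp _ _ _).symm

lemma lift_ν_comp_matrix_eq_lift_ν_iff (α : ∀ i j, A i ⟶ Bo j) (β : ∀ i j, C j ⟶ D i)
    (γ : ∀ i, A i ⟶ D i) (X : ∀ j, Bo j ⟶ C j) :
    biproduct.lift (fun j => S.ν (Bo j) (C j) (X j)) ≫
          biproduct.matrix (fun j i => S.Hbi (α i j) (β i j)) =
        biproduct.lift (fun i => S.ν (A i) (D i) (γ i)) ↔
      ∀ i, ∑ j, α i j ≫ X j ≫ β i j = γ i := by
  simp only [biproduct.hom_ext_iff, Category.assoc, lift_ν_comp_matrix_π, biproduct.lift_π,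
    (S.ν _ _).injective.eq_iff]

lemma lift_ν_symm_comp_π (φ : S.one ⟶ ⨁ fun j => (S.H.obj (op (Bo j))).obj (C j)) :
    biproduct.lift (fun j => S.ν (Bo j) (C j) ((S.ν (Bo j) (C j)).symm (φ ≫ biproduct.π _ j))) =
      φ := by
  ext j
  simp

end HomStructure

/-- solving a linear system `∑ⱼ αᵢⱼ ⬝ Xⱼ ⬝ βᵢⱼ = γᵢ` in `P` is the same as
lifting `(ν γᵢ)ᵢ : 1 ⟶ ⨁ᵢ H(Aᵢ, Dᵢ)` along the matrix morphism
`(H(αᵢⱼ, βᵢⱼ))ᵢⱼ : ⨁ⱼ H(Bⱼ, Cⱼ) ⟶ ⨁ᵢ H(Aᵢ, Dᵢ)` in `B`. -/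
theorem linear_system_iff_lift (P : Type u) [Category.{v} P] [Preadditive P]
    (B : Type u₂) [Category.{v₂} B] [Preadditive B] [HasFiniteBiproducts B]
    (S : HomStructure P B) (m n : ℕ)
    (A D : Fin m → P) (Bo C : Fin n → P)
    (α : ∀ i j, A i ⟶ Bo j) (β : ∀ i j, C j ⟶ D i) (γ : ∀ i, A i ⟶ D i) :
    (∀ X : ∀ j, Bo j ⟶ C j,
      (∀ i, (∑ j, α i j ≫ X j ≫ β i j) = γ i) ↔
        biproduct.lift (fun j => S.ν (Bo j) (C j) (X j)) ≫
            biproduct.matrix (fun j i => S.Hbi (α i j) (β i j)) =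
          biproduct.lift (fun i => S.ν (A i) (D i) (γ i))) ∧
    ((∃ X : ∀ j, Bo j ⟶ C j, ∀ i, (∑ j, α i j ≫ X j ≫ β i j) = γ i) ↔
      ∃ φ : S.one ⟶ ⨁ (fun j => (S.H.obj (Opposite.op (Bo j))).obj (C j)),
        φ ≫ biproduct.matrix (fun j i => S.Hbi (α i j) (β i j)) =
          biproduct.lift (fun i => S.ν (A i) (D i) (γ i))) := by
  have solves_iff := S.lift_ν_comp_matrix_eq_lift_ν_iff α β γ
  refine ⟨fun X => (solves_iff X).symm, ⟨?_, ?_⟩⟩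
  · rintro ⟨X, hX⟩
    exact ⟨_, (solves_iff X).2 hX⟩
  · rintro ⟨φ, hφ⟩
    refine ⟨fun j => (S.ν (Bo j) (C j)).symm (φ ≫ biproduct.π _ j), (solves_iff _).1 ?_⟩
    rwa [S.lift_ν_symm_comp_π]
end

section
/- Let A be an abelian category with enough projectives. Let ρ_A : A → R_A be a morphism of A, regarded as an object of the Freyd category A(A^op). Choose an epimorphism ε_Q : Q → R_A with Q projective, and an epimorphism ε_P : P → A ×_{R_A} Q with P projective, where A ×_{R_A} Q is the pullback of ρ_A : A → R_A and ε_Q : Q → R_A, with projections pr_A and pr_Q. Set ρ_P := pr_Q ∘ ε_P : P → Q. Then the morphism of A(A^op) from the object (ρ_A : A → R_A) to the object (ρ_P : P → Q), represented by the A-morphism pr_A ∘ ε_P : P → A (with witness ε_Q), is a monomorphism in A(A^op), and (ρ_P : P → Q) is an injective object of A(A^op). -/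
open CategoryTheory Limits Opposite

set_option linter.unusedSectionVars false

universe v u

/-!
A morphism `f : X ⟶ Y` of `A(Aᵒᵖ)`, represented by `a : Y.A ⟶ X.A` in `A`, is a monomorphism
iff `pushout.inr : X.A ⟶ pushout Y.ρ a` factors through `X.ρ`. For the morphism of the theorem
this holds because a pullback square along an epimorphism is also a weak pushout square.

If `P` and `Q` are projective and `m` is a mono represented by `c : C ⟶ B`, this factorisation,
composed with the witness of a map `g` into `(ρ : P ⟶ Q)`, gives `d : Q ⟶ pushout σ c` with
`g ≫ pushout.inr = ρ ≫ d`. Lifting first `d` and then a correction of `g` through the exact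
sequence `C ⟶ S ⊞ B ⟶ pushout σ c` extends `g` along `m` up to a null-homotopy.
-/

namespace Freyd

lemma map_eq_map_iff {P : Type u} [Category.{v} P] [Preadditive P] {X Y : FreydObj P}
    (f g : X ⟶ Y) :
    (Freyd.Q P).map f = (Freyd.Q P).map g ↔ ∃ l : X.A ⟶ Y.R, l ≫ Y.ρ = f.1 - g.1 :=
  Quotient.functor_map_eq_iff _ _ _

lemma map_eq_zero_iff {P : Type u} [Category.{v} P] [Preadditive P] {X Y : FreydObj P}
    (f : X ⟶ Y) : (Freyd.Q P).map f = 0 ↔ ∃ l : X.A ⟶ Y.R, l ≫ Y.ρ = f.1 := by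
  rw [← (Freyd.Q P).map_zero, map_eq_map_iff]
  simp only [FreydObj.zero_val, sub_zero]

end Freyd

section Abelian

variable {C : Type u} [Category.{v} C] [Abelian C]

namespace CategoryTheory

lemma IsPullback.exists_desc_of_epi {X₁ X₂ X₃ X₄ : C} {t : X₁ ⟶ X₂} {l : X₁ ⟶ X₃}
    {r : X₂ ⟶ X₄} {b : X₃ ⟶ X₄} (h : IsPullback t l r b) [Epi b] {Y : C}
    (f : X₂ ⟶ Y) (g : X₃ ⟶ Y) (w : t ≫ f = l ≫ g) :
    ∃ μ : X₄ ⟶ Y, r ≫ μ = f := by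
  have : Epi (biprod.desc r (-b)) := epi_of_epi_fac (biprod.inr_desc r (-b))
  have : Epi h.shortComplex'.g := this
  have hfg : h.shortComplex'.f ≫ biprod.desc f (-g) = 0 := by
    show biprod.lift t l ≫ biprod.desc f (-g) = 0
    rw [biprod.lift_desc, w, Preadditive.comp_neg, add_neg_cancel]
  obtain ⟨μ, hμ⟩ : ∃ μ, biprod.desc r (-b) ≫ μ = biprod.desc f (-g) :=
    ⟨_, (CokernelCofork.IsColimit.desc' h.exact_shortComplex'.gIsCokernel _ hfg).2⟩
  exact ⟨μ, by simpa only [biprod.inl_desc_assoc, biprod.inl_desc] using biprod.inl ≫= hμ⟩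

lemma IsPushout.exists_lift_of_projective {X₁ X₂ X₃ X₄ : C} {t : X₁ ⟶ X₂} {l : X₁ ⟶ X₃}
    {r : X₂ ⟶ X₄} {b : X₃ ⟶ X₄} (h : IsPushout t l r b) {P Q : C} [Projective P]
    [Projective Q] (ρ : P ⟶ Q) (p : P ⟶ X₃) (d : Q ⟶ X₄) (w : p ≫ b = ρ ≫ d) :
    ∃ (p' : P ⟶ X₁) (q' : Q ⟶ X₂) (k : Q ⟶ X₃), p' ≫ t = ρ ≫ q' ∧ p' ≫ l = p + ρ ≫ k := by
  have : Epi (biprod.desc r b) := h.epi_shortComplex_g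
  obtain ⟨s, hs⟩ : ∃ s, s ≫ biprod.desc r b = d := ⟨_, Projective.factorThru_comp d _⟩
  have hθ : (ρ ≫ s - biprod.lift 0 p) ≫ h.shortComplex.g = 0 := by
    show (ρ ≫ s - biprod.lift 0 p) ≫ biprod.desc r b = 0
    rw [Preadditive.sub_comp, Category.assoc, hs, biprod.lift_desc, zero_comp, zero_add, w,
      sub_self]
  obtain ⟨p', hp'⟩ : ∃ p', p' ≫ biprod.lift t (-l) = ρ ≫ s - biprod.lift 0 p :=
    ⟨_, h.exact_shortComplex.liftFromProjective_comp _ hθ⟩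
  refine ⟨p', s ≫ biprod.fst, -(s ≫ biprod.snd), ?_, ?_⟩
  · simpa only [Category.assoc, biprod.lift_fst, Preadditive.sub_comp, sub_zero] using
      hp' =≫ biprod.fst
  · have := hp' =≫ biprod.snd
    simp only [Category.assoc, biprod.lift_snd, Preadditive.comp_neg, Preadditive.sub_comp] at this
    rw [neg_eq_iff_eq_neg.mp this, Preadditive.comp_neg]
    abel

end CategoryTheory

namespace Freyd

lemma mono_map_iff {X Y : FreydObj Cᵒᵖ} (f : X ⟶ Y) :
    Mono ((Freyd.Q Cᵒᵖ).map f) ↔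
      ∃ ε : X.R.unop ⟶ pushout Y.ρ.unop f.1.unop, X.ρ.unop ≫ ε = pushout.inr _ _ := by
  constructor
  · intro hf
    -- `pushout.inr` defines a map `u : T ⟶ X` with `u ≫ f` null by the pushout square.
    let T : FreydObj Cᵒᵖ := ⟨op (pushout Y.ρ.unop f.1.unop), op (pushout Y.ρ.unop f.1.unop), 0⟩
    let u : T ⟶ X := ⟨(pushout.inr _ _).op, 0, by simp [T]⟩
    have hu : (Freyd.Q Cᵒᵖ).map u ≫ (Freyd.Q Cᵒᵖ).map f = 0 := by
      rw [← Functor.map_comp, map_eq_zero_iff]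
      exact ⟨(pushout.inl _ _).op, Quiver.Hom.unop_inj pushout.condition⟩
    obtain ⟨ε, hε⟩ := (map_eq_zero_iff u).1 ((Preadditive.mono_iff_cancel_zero _).1 hf _ _ hu)
    exact ⟨ε.unop, congrArg Quiver.Hom.unop hε⟩
  · rintro ⟨ε, hε⟩
    refine Preadditive.mono_of_cancel_zero _ fun {T} g hg => ?_
    obtain ⟨u, rfl⟩ := (Freyd.Q Cᵒᵖ).map_surjective g
    rw [← Functor.map_comp, map_eq_zero_iff] at hg
    obtain ⟨l, hl⟩ := hg
    rw [map_eq_zero_iff]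
    refine ⟨(ε ≫ pushout.desc l.unop u.1.unop (congrArg Quiver.Hom.unop hl)).op,
      Quiver.Hom.unop_inj ?_⟩
    change X.ρ.unop ≫ ε ≫ _ = _
    rw [reassoc_of% hε, pushout.inr_desc]

lemma injective_obj_of_projective {P Q : C} [Projective P] [Projective Q] (ρ : P ⟶ Q) :
    Injective ((Freyd.Q Cᵒᵖ).obj ⟨op Q, op P, ρ.op⟩) := by
  refine ⟨fun {W Z} g m hm => ?_⟩
  obtain ⟨m, rfl⟩ := (Freyd.Q Cᵒᵖ).map_surjective m
  obtain ⟨g, rfl⟩ := (Freyd.Q Cᵒᵖ).map_surjective g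
  obtain ⟨ε, hε⟩ := (mono_map_iff m).1 hm
  obtain ⟨w, hw⟩ := g.2
  have hw' : g.1.unop ≫ W.as.ρ.unop = ρ ≫ w.unop := congrArg Quiver.Hom.unop hw
  obtain ⟨p', q', k, hq', hp'⟩ := (IsPushout.of_hasPushout Z.as.ρ.unop m.1.unop)
    |>.exists_lift_of_projective ρ g.1.unop (w.unop ≫ ε) (by rw [← hε, reassoc_of% hw'])
  refine ⟨(Freyd.Q Cᵒᵖ).map ⟨p'.op, q'.op, Quiver.Hom.unop_inj hq'⟩, ?_⟩
  rw [← Functor.map_comp, map_eq_map_iff]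
  refine ⟨k.op, Quiver.Hom.unop_inj ?_⟩
  change ρ ≫ k = p' ≫ m.1.unop - g.1.unop
  rw [hp', add_sub_cancel_left]

end Freyd

/-- let `A` be abelian with enough projectives, `ρ_A : A ⟶ R_A` a morphism
of `A` viewed as an object of `A(Aᵒᵖ)`, `ε_Q : Q ⟶ R_A` an epimorphism with `Q`
projective and `ε_P : P ⟶ A ×_{R_A} Q` an epimorphism with `P` projective; set
`ρ_P := pr_Q ∘ ε_P`.  Then the morphism `(ρ_A) ⟶ (ρ_P)` of `A(Aᵒᵖ)` represented by
`pr_A ∘ ε_P` (with witness `ε_Q`) is a monomorphism, and `(ρ_P : P ⟶ Q)` is an injective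
object of `A(Aᵒᵖ)`. -/
theorem freyd_op_mono_into_injective (A : Type u) [Category.{v} A] [Abelian A]
    {A₀ RA : A} (ρA : A₀ ⟶ RA)
    {Q : A} (εQ : Q ⟶ RA) [Epi εQ] (hQ : Projective Q)
    {Pp : A} (εP : Pp ⟶ pullback ρA εQ) [Epi εP] (hP : Projective Pp) :
    Mono ((Freyd.Q Aᵒᵖ).map
      (X := ⟨Opposite.op RA, Opposite.op A₀, ρA.op⟩)
      (Y := ⟨Opposite.op Q, Opposite.op Pp, (εP ≫ pullback.snd ρA εQ).op⟩)
      ⟨(εP ≫ pullback.fst ρA εQ).op, ⟨εQ.op, by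
        rw [← op_comp, ← op_comp]
        congr 1
        simp [pullback.condition]⟩⟩) ∧
    Injective ((Freyd.Q Aᵒᵖ).obj
      ⟨Opposite.op Q, Opposite.op Pp, (εP ≫ pullback.snd ρA εQ).op⟩) := by
  have := hP
  have := hQ
  refine ⟨(Freyd.mono_map_iff _).2 ?_, Freyd.injective_obj_of_projective _⟩
  let ρP := εP ≫ pullback.snd ρA εQ
  let a := εP ≫ pullback.fst ρA εQ
  have hcond : pullback.fst ρA εQ ≫ pushout.inr ρP a = pullback.snd ρA εQ ≫ pushout.inl ρP a :=
    (cancel_epi εP).1 <| by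
      simpa only [a, ρP, Category.assoc] using (pushout.condition (f := ρP) (g := a)).symm
  exact (IsPullback.of_hasPullback ρA εQ).exists_desc_of_epi _ _ hcond
end Abelian
end

section
/- Let A be an abelian category with enough projectives and let ρ_A : A → R_A be a morphism of A, regarded as an object of the Freyd category A(A^op). Let F : A → Ab be the corresponding finitely presented covariant functor, namely the cokernel of the natural transformation Hom_A(R_A, −) → Hom_A(A, −) induced by ρ_A. With ε_Q : Q → R_A an epimorphism from a projective Q, ε_P : P → A ×_{R_A} Q an epimorphism from a projective P (pullback of ρ_A and ε_Q), and ρ_P := pr_Q ∘ ε_P, the monomorphism of A(A^op) from (ρ_A : A → R_A) to (ρ_P : P → Q) represented by pr_A ∘ ε_P splits (admits a retraction) if and only if F is right exact. Equivalently, F is right exact if and only if (ρ_A : A → R_A) is an injective object of A(A^op). -/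
/-!
For `ρ : A₀ ⟶ R` write `F_ρ = coker(Hom(R, -) ⟶ Hom(A₀, -))`. Taking the cokernel of
`preadditiveCoyoneda` turns `ρ ↦ F_ρ` into a functor on `A(Aᵒᵖ)`, so a splitting of
`(ρ_A) ⟶ (ρ_P)` makes `F_{ρ_A}` a retract of `F_{ρ_P}`; the latter is right exact, being a
cokernel of the exact functors `Hom(Q, -) ⟶ Hom(P, -)`, and retracts of right exact functors are
right exact.

Conversely, let `F_{ρ_A}` be right exact, `m : Z₁ ⟶ Z₂` a monomorphism of `A(Aᵒᵖ)` and
`u : Z₁ ⟶ (ρ_A)`. Testing `m` against objects `(Z ← Z)` with zero relations shows that the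
inclusion of `Z₁.A` into the pushout `W` of `m` and `Z₂.ρ` factors through `Z₁.ρ`, so `u` becomes
zero in `F_{ρ_A}(W)`. Applying `F_{ρ_A}` to the right exact sequence
`Z₂.A ⟶ Z₁.A ⊞ Z₂.R ⟶ W ⟶ 0` lifts `u` to `t : A₀ ⟶ Z₂.A` modulo `ρ_A`, and `t` is the
required extension of `u` along `m`; hence `(ρ_A)` is injective. Finally, an injective object
splits off every monomorphism, in particular `(ρ_A) ⟶ (ρ_P)`, which is a monomorphism because
the pullback of the epimorphism `ε_Q` is also a pushout.
-/

open CategoryTheory Limits Opposite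

set_option linter.unusedSectionVars false

universe v u

section ColimitsOfFunctors

variable {J K C D : Type*} [Category J] [Category K] [Category C] [Category D]

theorem preservesColimitsOfShape_colimit [HasColimitsOfShape K D] (F : K ⥤ C ⥤ D)
    [∀ k, PreservesColimitsOfShape J (F.obj k)] : PreservesColimitsOfShape J (colimit F) := by
  have : PreservesColimitsOfShape J F.flip :=
    preservesColimitsOfShape_of_evaluation F.flip J fun k =>
      inferInstanceAs (PreservesColimitsOfShape J (F.obj k))
  exact preservesColimitsOfShape_of_natIso (colimitIsoFlipCompColim F).symm

instance preservesFiniteColimits_cokernel [HasZeroMorphisms D] [HasFiniteColimits D]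
    {G H : C ⥤ D} (σ : G ⟶ H) [PreservesFiniteColimits G] [PreservesFiniteColimits H] :
    PreservesFiniteColimits (cokernel σ) where
  preservesFiniteColimits J _ _ := by
    have : ∀ k, PreservesColimitsOfShape J ((parallelPair σ 0).obj k) := by
      rintro (_ | _) <;> dsimp <;> infer_instance
    exact preservesColimitsOfShape_colimit (parallelPair σ 0)

variable [HasColimitsOfShape J D] (K : J ⥤ C) [HasColimit K]

noncomputable def colimitPostNatTrans :
    (Functor.whiskeringLeft J C D).obj K ⋙ colim ⟶ (evaluation C D).obj (colimit K) where
  app F := colimit.post K F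
  naturality F G σ := colimit.hom_ext fun j => by simp

theorem preservesColimitsOfShape_of_retract [HasColimitsOfShape J C] {F G : C ⥤ D}
    (h : Retract F G) [PreservesColimitsOfShape J G] : PreservesColimitsOfShape J F where
  preservesColimit {K} :=
    have : IsIso (colimit.post K F) := MorphismProperty.of_retract (P := .isomorphisms D)
      ((colimitPostNatTrans K).retractArrowApp h) (inferInstanceAs (IsIso (colimit.post K G)))
    preservesColimit_of_isIso_post F K

end ColimitsOfFunctors

instance additive_preadditiveCoyoneda {A : Type*} [Category A] [Preadditive A] :
    (preadditiveCoyoneda (C := A)).Additive where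
  map_add := by intros; ext; exact Preadditive.add_comp _ _ _ _ _ _

namespace FreydObj

variable {P : Type u} [Category.{v} P] [Preadditive P]

theorem mono_map_iff {X Y : FreydObj P} (f : X ⟶ Y) :
    Mono ((Freyd.Q P).map f) ↔ ∀ ⦃Z : P⦄ (α : Z ⟶ X.A) (l : Z ⟶ Y.R),
      l ≫ Y.ρ = α ≫ f.1 → ∃ k : Z ⟶ X.R, k ≫ X.ρ = α := by
  constructor
  · intro _ Z α l hl
    let T : FreydObj P := ⟨Z, Z, 0⟩
    have hα : (Freyd.Q P).map (X := T) ⟨α, 0, by simp [T]⟩ = (Freyd.Q P).map 0 := by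
      rw [← cancel_mono ((Freyd.Q P).map f), ← Functor.map_comp, ← Functor.map_comp,
        Quotient.functor_map_eq_iff]
      exact ⟨l, by simpa using hl⟩
    obtain ⟨k, hk⟩ := (Quotient.functor_map_eq_iff _ _ _).mp hα
    exact ⟨k, by simpa using hk⟩
  · intro h
    refine Preadditive.mono_of_cancel_zero _ fun {Z} g hg => ?_
    obtain ⟨g, rfl⟩ := (Freyd.Q P).map_surjective g
    rw [← Functor.map_comp, ← Functor.map_zero (Freyd.Q P), Quotient.functor_map_eq_iff] at hg
    obtain ⟨l, hl⟩ := hg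
    obtain ⟨k, hk⟩ := h g.1 l (by simpa using hl)
    rw [← Functor.map_zero (Freyd.Q P), Quotient.functor_map_eq_iff]
    exact ⟨k, by simpa using hk⟩

variable {C : Type*} [Category C] [Preadditive C] [HasCokernels C] (G : P ⥤ C)

noncomputable def cokernelFunctor : FreydObj P ⥤ C where
  obj X := cokernel (G.map X.ρ)
  map f := cokernel.map _ _ (G.map f.2.choose) (G.map f.1) (by
    rw [← G.map_comp, ← G.map_comp]; exact congrArg G.map f.2.choose_spec)
  map_id X := by ext; simp
  map_comp f g := by ext; simp

@[simp]
theorem π_cokernelFunctor_map {X Y : FreydObj P} (f : X ⟶ Y) :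
    cokernel.π (G.map X.ρ) ≫ (cokernelFunctor G).map f = G.map f.1 ≫ cokernel.π (G.map Y.ρ) :=
  cokernel.π_desc _ _ _

end FreydObj

noncomputable def Freyd.lift {P : Type u} [Category.{v} P] [Preadditive P]
    {C : Type*} [Category C] [Preadditive C] [HasCokernels C] (G : P ⥤ C) [G.Additive] :
    Freyd P ⥤ C :=
  CategoryTheory.Quotient.lift _ (FreydObj.cokernelFunctor G) fun X Y f g ⟨l, hl⟩ => by
    have hfg : G.map f.1 ≫ cokernel.π (G.map Y.ρ) = G.map g.1 ≫ cokernel.π (G.map Y.ρ) := by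
      rw [← sub_eq_zero, ← Preadditive.sub_comp, ← G.map_sub, ← hl, G.map_comp, Category.assoc,
        cokernel.condition, Limits.comp_zero]
    refine coequalizer.hom_ext ?_
    rw [FreydObj.π_cokernelFunctor_map, FreydObj.π_cokernelFunctor_map]
    exact hfg

theorem AddCommGrpCat.surjective_and_exact_of_isColimit {X Y Z : AddCommGrpCat.{v}}
    {f : X ⟶ Y} {g : Y ⟶ Z} {w : f ≫ g = 0} (hg : IsColimit (CokernelCofork.ofπ g w)) :
    Function.Surjective g ∧ ∀ y, g y = 0 → ∃ x, f x = y :=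
  ⟨(AddCommGrpCat.epi_iff_surjective _).mp (epi_of_isColimit_cofork hg),
    (ShortComplex.ab_exact_iff (.mk f g w)).mp (ShortComplex.exact_of_g_is_cokernel _ hg)⟩

section Preadditive

variable {A : Type u} [Category.{v} A] [Preadditive A]

noncomputable abbrev fpFunctor {A₀ RA : A} (ρ : A₀ ⟶ RA) : A ⥤ AddCommGrpCat.{v} :=
  cokernel (preadditiveCoyoneda.map ρ.op)

namespace fpFunctor

variable {A₀ RA : A} (ρ : A₀ ⟶ RA)

noncomputable def mk {X : A} (x : A₀ ⟶ X) : (fpFunctor ρ).obj X :=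
  (cokernel.π (preadditiveCoyoneda.map ρ.op)).app X x

theorem mk_surjective (X : A) : Function.Surjective (mk ρ : (A₀ ⟶ X) → _) :=
  (AddCommGrpCat.surjective_and_exact_of_isColimit (isColimitCoforkMapOfIsColimit'
    ((evaluation A AddCommGrpCat.{v}).obj X) (cokernel.condition _)
    (cokernelIsCokernel (preadditiveCoyoneda.map ρ.op)))).1

theorem mk_eq_zero_iff {X : A} (x : A₀ ⟶ X) : mk ρ x = 0 ↔ ∃ k : RA ⟶ X, ρ ≫ k = x := by
  refine ⟨(AddCommGrpCat.surjective_and_exact_of_isColimit (isColimitCoforkMapOfIsColimit'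
    ((evaluation A AddCommGrpCat.{v}).obj X) (cokernel.condition _)
    (cokernelIsCokernel (preadditiveCoyoneda.map ρ.op)))).2 x, ?_⟩
  rintro ⟨k, rfl⟩
  exact congr_arg (fun τ => τ.app X k) (cokernel.condition (preadditiveCoyoneda.map ρ.op))

theorem mk_sub {X : A} (x y : A₀ ⟶ X) : mk ρ (x - y) = mk ρ x - mk ρ y :=
  map_sub _ x y

theorem map_mk {X Y : A} (u : X ⟶ Y) (x : A₀ ⟶ X) :
    (fpFunctor ρ).map u (mk ρ x) = mk ρ (x ≫ u) :=
  (NatTrans.naturality_apply (cokernel.π (preadditiveCoyoneda.map ρ.op)) u x).symm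

end fpFunctor

end Preadditive

section Abelian

variable {A : Type u} [Category.{v} A] [Abelian A]

theorem CategoryTheory.IsPullback.exists_comp_eq_of_epi {X₁ X₂ X₃ X₄ : A} {t : X₁ ⟶ X₂}
    {l : X₁ ⟶ X₃} {r : X₂ ⟶ X₄} {b : X₃ ⟶ X₄} (h : IsPullback t l r b) [Epi b] {W : A}
    (d : X₂ ⟶ W) (e : X₃ ⟶ W) (hde : t ≫ d = l ≫ e) : ∃ k : X₄ ⟶ W, r ≫ k = d := by
  have : Epi h.shortComplex'.g := by
    have : Epi (biprod.inr ≫ biprod.desc r (-b)) := by rw [biprod.inr_desc]; infer_instance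
    exact epi_of_epi biprod.inr (biprod.desc r (-b))
  obtain ⟨k, hk⟩ := CokernelCofork.IsColimit.desc' h.exact_shortComplex'.gIsCokernel
    (biprod.desc d (-e)) (by change biprod.lift t l ≫ _ = 0; simp [hde])
  have hk' : biprod.desc r (-b) ≫ k = biprod.desc d (-e) := hk
  exact ⟨k, by rw [← biprod.inl_desc_assoc r (-b) k, hk', biprod.inl_desc]⟩

instance preservesFiniteColimits_preadditiveCoyoneda_obj_of_projective (P : A) [Projective P] :
    PreservesFiniteColimits (preadditiveCoyoneda.obj (op P)) := by
  have := (Projective.projective_iff_preservesEpimorphisms_preadditiveCoyoneda_obj P).mp ‹_›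
  have : (preadditiveCoyoneda.obj (op P)).PreservesHomology :=
    Functor.preservesHomology_of_preservesEpis_and_kernels _
  exact Functor.preservesFiniteColimits_of_preservesHomology _

theorem fpFunctor.exists_sub_eq_of_isColimit {A₀ RA : A} (ρ : A₀ ⟶ RA)
    [PreservesFiniteColimits (fpFunctor ρ)] {X Y Z : A}
    {φ : X ⟶ Y} {ψ : Y ⟶ Z} {w : φ ≫ ψ = 0} (hψ : IsColimit (CokernelCofork.ofπ ψ w))
    {x : A₀ ⟶ Y} (hx : ∃ k : RA ⟶ Z, ρ ≫ k = x ≫ ψ) :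
    ∃ (t : A₀ ⟶ X) (l : RA ⟶ Y), ρ ≫ l = t ≫ φ - x := by
  have hFψ := AddCommGrpCat.surjective_and_exact_of_isColimit
    (isColimitCoforkMapOfIsColimit' (fpFunctor ρ) w hψ)
  obtain ⟨y, hy⟩ := hFψ.2 (mk ρ x) (by rwa [map_mk, mk_eq_zero_iff])
  obtain ⟨t, rfl⟩ := mk_surjective ρ X y
  rw [map_mk, ← sub_eq_zero, ← mk_sub, mk_eq_zero_iff] at hy
  exact ⟨t, hy⟩

abbrev freydOp {A₀ RA : A} (ρ : A₀ ⟶ RA) : FreydObj Aᵒᵖ := ⟨op RA, op A₀, ρ.op⟩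

abbrev freydOpHom {A₀ RA B₀ RB : A} {ρ : A₀ ⟶ RA} {ρ' : B₀ ⟶ RB} (g : B₀ ⟶ A₀) (e : RB ⟶ RA)
    (w : g ≫ ρ = ρ' ≫ e) : freydOp ρ ⟶ freydOp ρ' :=
  ⟨g.op, e.op, by rw [← op_comp, ← op_comp, w]⟩

theorem mono_map_freydOpHom_pullback {A₀ RA Q P : A} (ρ : A₀ ⟶ RA) (e : Q ⟶ RA) [Epi e]
    (p : P ⟶ pullback ρ e) [Epi p] :
    Mono ((Freyd.Q Aᵒᵖ).map (freydOpHom (ρ := ρ) (ρ' := p ≫ pullback.snd ρ e)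
      (p ≫ pullback.fst ρ e) e (by simp [pullback.condition]))) := by
  refine (FreydObj.mono_map_iff _).mpr fun Z α l hl => ?_
  have hl' : p ≫ pullback.snd ρ e ≫ l.unop = p ≫ pullback.fst ρ e ≫ α.unop := by
    simpa using congr_arg Quiver.Hom.unop hl
  obtain ⟨k, hk⟩ := (IsPullback.of_hasPullback ρ e).exists_comp_eq_of_epi α.unop l.unop
    ((cancel_epi p).mp hl').symm
  exact ⟨k.op, Quiver.Hom.unop_inj (by simpa using hk)⟩

theorem injective_of_preservesFiniteColimits_fpFunctor {A₀ RA : A} (ρ : A₀ ⟶ RA)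
    [PreservesFiniteColimits (fpFunctor ρ)] : Injective ((Freyd.Q Aᵒᵖ).obj (freydOp ρ)) where
  factors := by
    rintro ⟨Z₁⟩ ⟨Z₂⟩ g m hm
    obtain ⟨u, rfl⟩ := (Freyd.Q Aᵒᵖ).map_surjective g
    obtain ⟨m, rfl⟩ := (Freyd.Q Aᵒᵖ).map_surjective m
    obtain ⟨w, hw⟩ := u.2
    have sq := IsPushout.of_hasPushout m.1.unop Z₂.ρ.unop
    obtain ⟨k, hk⟩ := (FreydObj.mono_map_iff m).mp hm (pushout.inl m.1.unop Z₂.ρ.unop).op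
      (pushout.inr m.1.unop Z₂.ρ.unop).op (Quiver.Hom.unop_inj sq.w.symm)
    obtain ⟨t, l, hl⟩ := fpFunctor.exists_sub_eq_of_isColimit ρ sq.isColimitCokernelCofork
      (x := u.1.unop ≫ biprod.inl) ⟨w.unop ≫ k.unop, by
        have hw' : u.1.unop ≫ Z₁.ρ.unop = ρ ≫ w.unop := congr_arg Quiver.Hom.unop hw
        have hk' : Z₁.ρ.unop ≫ k.unop = pushout.inl _ _ := congr_arg Quiver.Hom.unop hk
        simp [← hk', reassoc_of% hw']⟩
    have hl₂ : ρ ≫ l ≫ biprod.snd = -(t ≫ Z₂.ρ.unop) := by simpa using hl =≫ biprod.snd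
    refine ⟨(Freyd.Q Aᵒᵖ).map ⟨t.op, (-(l ≫ biprod.snd)).op, ?_⟩, ?_⟩
    · exact Quiver.Hom.unop_inj (by simp [hl₂])
    · rw [← Functor.map_comp, Quotient.functor_map_eq_iff]
      exact ⟨(l ≫ biprod.fst).op, Quiver.Hom.unop_inj (by simpa using hl =≫ biprod.fst)⟩

theorem exists_retraction_iff_preservesFiniteColimits_and_iff_injective {A₀ RA P Q : A}
    (ρ : A₀ ⟶ RA) (ρ' : P ⟶ Q) [PreservesFiniteColimits (fpFunctor ρ')]
    (ι : (Freyd.Q Aᵒᵖ).obj (freydOp ρ) ⟶ (Freyd.Q Aᵒᵖ).obj (freydOp ρ')) [Mono ι] :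
    ((∃ r, ι ≫ r = 𝟙 _) ↔ Nonempty (PreservesFiniteColimits (fpFunctor ρ))) ∧
      (Nonempty (PreservesFiniteColimits (fpFunctor ρ)) ↔
        Injective ((Freyd.Q Aᵒᵖ).obj (freydOp ρ))) := by
  -- `Freyd.lift preadditiveCoyoneda` sends `freydOp ρ` to `fpFunctor ρ`.
  have retraction_rightExact :
      (∃ r, ι ≫ r = 𝟙 _) → Nonempty (PreservesFiniteColimits (fpFunctor ρ)) :=
    fun ⟨r, hr⟩ => ⟨⟨fun _ _ _ => preservesColimitsOfShape_of_retract (G := fpFunctor ρ')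
      (Retract.map ⟨ι, r, hr⟩ (Freyd.lift preadditiveCoyoneda))⟩⟩
  have rightExact_injective : Nonempty (PreservesFiniteColimits (fpFunctor ρ)) →
      Injective ((Freyd.Q Aᵒᵖ).obj (freydOp ρ)) :=
    fun ⟨_⟩ => injective_of_preservesFiniteColimits_fpFunctor ρ
  have injective_retraction : Injective ((Freyd.Q Aᵒᵖ).obj (freydOp ρ)) → ∃ r, ι ≫ r = 𝟙 _ :=
    fun _ => ⟨Injective.factorThru (𝟙 _) ι, Injective.comp_factorThru _ _⟩
  exact ⟨⟨retraction_rightExact, injective_retraction ∘ rightExact_injective⟩,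
    ⟨rightExact_injective, retraction_rightExact ∘ injective_retraction⟩⟩

end Abelian

/-- let `A` be abelian with enough projectives, `ρ_A : A ⟶ R_A` a morphism
of `A` viewed as an object of `A(Aᵒᵖ)` and `F = coker(Hom(R_A,−) → Hom(A,−))` the
corresponding finitely presented covariant functor.  With `ε_Q : Q ⟶ R_A` and
`ε_P : P ⟶ A ×_{R_A} Q` epimorphisms from projectives and `ρ_P = pr_Q ∘ ε_P`, the
monomorphism `(ρ_A) ⟶ (ρ_P)` represented by `pr_A ∘ ε_P` splits if and only if `F` is
right exact; equivalently, `F` is right exact if and only if `(ρ_A)` is an injective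
object of `A(Aᵒᵖ)`. -/
theorem fp_functor_rightExact_iff (A : Type u) [Category.{v} A] [Abelian A]
    {A₀ RA : A} (ρA : A₀ ⟶ RA)
    {Q : A} (εQ : Q ⟶ RA) [Epi εQ] (hQ : Projective Q)
    {Pp : A} (εP : Pp ⟶ pullback ρA εQ) [Epi εP] (hP : Projective Pp) :
    ((∃ r : (Freyd.Q Aᵒᵖ).obj ⟨Opposite.op Q, Opposite.op Pp,
          (εP ≫ pullback.snd ρA εQ).op⟩ ⟶
        (Freyd.Q Aᵒᵖ).obj ⟨Opposite.op RA, Opposite.op A₀, ρA.op⟩,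
      (Freyd.Q Aᵒᵖ).map
        (X := ⟨Opposite.op RA, Opposite.op A₀, ρA.op⟩)
        (Y := ⟨Opposite.op Q, Opposite.op Pp, (εP ≫ pullback.snd ρA εQ).op⟩)
        ⟨(εP ≫ pullback.fst ρA εQ).op, ⟨εQ.op, by
          rw [← op_comp, ← op_comp]
          congr 1
          simp [pullback.condition]⟩⟩ ≫ r =
        𝟙 ((Freyd.Q Aᵒᵖ).obj ⟨Opposite.op RA, Opposite.op A₀, ρA.op⟩)) ↔
      Nonempty (PreservesFiniteColimits (cokernel (preadditiveCoyoneda.map ρA.op)))) ∧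
    (Nonempty (PreservesFiniteColimits (cokernel (preadditiveCoyoneda.map ρA.op))) ↔
      Injective ((Freyd.Q Aᵒᵖ).obj ⟨Opposite.op RA, Opposite.op A₀, ρA.op⟩)) := by
  have := hQ
  have := hP
  have := mono_map_freydOpHom_pullback ρA εQ εP
  exact exists_retraction_iff_preservesFiniteColimits_and_iff_injective ρA _ _
end
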